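/- There exists an absolute constant C > 0 such that for every integer n ≥ 2, every monic polynomial f over ℂ of degree n with all zeros ζ₁,…,ζₙ (counted with multiplicity) in the closed unit disk D̄(0,1), with λ₁,…,λ_{n−1} the zeros of f′ counted with multiplicity, every real R with 1 < R ≤ 3/2, and every p ∈ ℂ with |p| = R, one has | (1/n) ∑_{i=1}^{n} (R² − |ζᵢ|²)/|p − ζᵢ|² − (1/(n−1)) ∑_{j=1}^{n−1} (R² − |λⱼ|²)/|p − λⱼ|² | ≤ C · log(1/(R−1)) / (n (R−1)²). -/

import Mathlib

/-!
Write `A = ∑ (p - ζᵢ)⁻¹ = f'(p)/f(p)` and `B = ∑ (p - ζᵢ)⁻²`, so that `f''(p)/f(p) = A² - B` and the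
logarithmic derivative of `f'` at `p` is `L = (A² - B)/A`. The Poisson kernel at `p` of `w` is
`2 Re (p/(p - w)) - 1`, so the two balayages are `2 Re(pA)/n - 1` and `2 Re(pL)/(n-1) - 1`, whose
difference is `2 Re (p (nB - A²) / (n(n-1)A))`. For `|ζᵢ| ≤ 1 < |p|` every `p/(p - ζᵢ)` has real part
at least `|p|(|p|-1)|p - ζᵢ|⁻²`, so `|A| ≥ (|p|-1) T` with `T = ∑ |p - ζᵢ|⁻²`, while Cauchy–Schwarz
gives `|nB - A²| ≤ 2nT`. Hence the difference is `O(1/(n(R-1)))`, which is stronger than the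
claimed logarithmic bound.
-/

open Polynomial Complex Finset ComplexConjugate

section Polynomial

variable {K ι : Type*} [Field K] {s : Finset ι} {a : ι → K} {x : K}

theorem eval_derivative_prod_X_sub_C (hx : ∀ i ∈ s, x ≠ a i) :
    eval x (derivative (∏ i ∈ s, (X - C (a i)))) =
      (∏ i ∈ s, (x - a i)) * ∑ i ∈ s, (x - a i)⁻¹ := by
  classical
  simp only [derivative_prod_finset, derivative_X_sub_C, mul_one, eval_finsetSum, eval_prod,
    eval_sub, eval_X, eval_C, mul_sum]
  refine sum_congr rfl fun i hi => ?_
  rw [← mul_prod_erase s (fun j => x - a j) hi, mul_comm (x - a i), mul_assoc,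
    mul_inv_cancel₀ (sub_ne_zero.2 (hx i hi)), mul_one]

theorem eval_derivative_derivative_prod_X_sub_C (hx : ∀ i ∈ s, x ≠ a i) :
    eval x (derivative (derivative (∏ i ∈ s, (X - C (a i))))) =
      (∏ i ∈ s, (x - a i)) * ((∑ i ∈ s, (x - a i)⁻¹) ^ 2 - ∑ i ∈ s, ((x - a i)⁻¹) ^ 2) := by
  classical
  simp only [derivative_prod_finset (s := s), derivative_X_sub_C, mul_one, derivative_sum,
    eval_finsetSum]
  have hterm : ∀ i ∈ s, eval x (derivative (∏ j ∈ s.erase i, (X - C (a j)))) =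
      (∏ j ∈ s, (x - a j)) * ((x - a i)⁻¹ * ∑ j ∈ s, (x - a j)⁻¹ - ((x - a i)⁻¹) ^ 2) := by
    intro i hi
    rw [eval_derivative_prod_X_sub_C fun j hj => hx j (mem_of_mem_erase hj),
      ← mul_prod_erase s (fun j => x - a j) hi, ← add_sum_erase s (fun j => (x - a j)⁻¹) hi]
    field_simp [sub_ne_zero.2 (hx i hi)]
    ring
  rw [sum_congr rfl hterm, ← mul_sum, sum_sub_distrib, ← sum_mul]
  ring

variable {κ : Type*} {t : Finset κ} {b : κ → K} {c : K}

theorem ne_of_derivative_prod_X_sub_C_eq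
    (h : derivative (∏ i ∈ s, (X - C (a i))) = C c * ∏ j ∈ t, (X - C (b j)))
    (hx : ∀ i ∈ s, x ≠ a i) (hA : ∑ i ∈ s, (x - a i)⁻¹ ≠ 0) : ∀ j ∈ t, x ≠ b j := by
  have heval := congr_arg (eval x) h
  rw [eval_derivative_prod_X_sub_C hx] at heval
  simp only [eval_mul, eval_C, eval_prod, eval_sub, eval_X] at heval
  rintro j hj rfl
  rw [prod_eq_zero hj (sub_self _), mul_zero] at heval
  exact mul_ne_zero (prod_ne_zero_iff.2 fun i hi => sub_ne_zero.2 (hx i hi)) hA heval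

theorem sum_inv_sub_of_derivative_prod_X_sub_C_eq
    (h : derivative (∏ i ∈ s, (X - C (a i))) = C c * ∏ j ∈ t, (X - C (b j)))
    (hx : ∀ i ∈ s, x ≠ a i) (hA : ∑ i ∈ s, (x - a i)⁻¹ ≠ 0) :
    ∑ j ∈ t, (x - b j)⁻¹ =
      ((∑ i ∈ s, (x - a i)⁻¹) ^ 2 - ∑ i ∈ s, ((x - a i)⁻¹) ^ 2) / ∑ i ∈ s, (x - a i)⁻¹ := by
  have hb := ne_of_derivative_prod_X_sub_C_eq h hx hA
  have h1 := congr_arg (eval x) h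
  have h2 := congr_arg (fun q => eval x (derivative q)) h
  simp only [derivative_C_mul, eval_mul, eval_C] at h1 h2
  rw [eval_derivative_prod_X_sub_C hx, eval_prod] at h1
  rw [eval_derivative_derivative_prod_X_sub_C hx, eval_derivative_prod_X_sub_C hb] at h2
  simp only [eval_sub, eval_X, eval_C] at h1
  have hP : ∏ i ∈ s, (x - a i) ≠ 0 := prod_ne_zero_iff.2 fun i hi => sub_ne_zero.2 (hx i hi)
  rw [eq_div_iff hA]
  apply mul_left_cancel₀ hP
  linear_combination (∑ j ∈ t, (x - b j)⁻¹) * h1 - h2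

end Polynomial

section Poisson

variable {p w : ℂ} {r : ℝ}

theorem re_div_eq_re_mul_conj_div (p q : ℂ) : (p / q).re = (p * conj q).re / ‖q‖ ^ 2 := by
  rw [div_eq_mul_inv, inv_def, ← mul_assoc, re_mul_ofReal, Complex.sq_norm, div_eq_mul_inv]

theorem re_mul_conj_sub (p w : ℂ) : (p * conj (p - w)).re = ‖p‖ ^ 2 - (p * conj w).re := by
  rw [map_sub, mul_sub, sub_re, mul_conj, ofReal_re, Complex.sq_norm]

theorem poissonKernel_eq (hw : p ≠ w) :
    (‖p‖ ^ 2 - ‖w‖ ^ 2) / ‖p - w‖ ^ 2 = 2 * (p * (p - w)⁻¹).re - 1 := by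
  have hpw : ‖p - w‖ ^ 2 ≠ 0 := by simpa [sub_eq_zero] using hw
  rw [← div_eq_mul_inv, re_div_eq_re_mul_conj_div, re_mul_conj_sub, eq_sub_iff_add_eq,
    ← mul_div_assoc, div_add_one hpw, div_left_inj' hpw]
  simp only [Complex.sq_norm, normSq_sub]
  ring

theorem le_re_mul_inv_sub (hw : ‖w‖ ≤ r) :
    ‖p‖ * (‖p‖ - r) * ‖(p - w)⁻¹‖ ^ 2 ≤ (p * (p - w)⁻¹).re := by
  rw [← div_eq_mul_inv, re_div_eq_re_mul_conj_div, re_mul_conj_sub, norm_inv, inv_pow,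
    ← div_eq_mul_inv]
  have hre : (p * conj w).re ≤ ‖p‖ * r :=
    calc (p * conj w).re ≤ ‖p * conj w‖ := re_le_norm _
      _ = ‖p‖ * ‖w‖ := by rw [norm_mul, norm_conj]
      _ ≤ ‖p‖ * r := by gcongr
  gcongr
  linarith

variable {ι : Type*} {s : Finset ι} {z : ι → ℂ}

theorem sum_poissonKernel_eq (hz : ∀ i ∈ s, p ≠ z i) :
    ∑ i ∈ s, (‖p‖ ^ 2 - ‖z i‖ ^ 2) / ‖p - z i‖ ^ 2 =
      2 * (p * ∑ i ∈ s, (p - z i)⁻¹).re - #s := by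
  rw [sum_congr rfl fun i hi => poissonKernel_eq (hz i hi), sum_sub_distrib, ← mul_sum,
    ← re_sum, ← mul_sum]
  simp

theorem le_re_mul_sum_inv_sub (hz : ∀ i ∈ s, ‖z i‖ ≤ r) :
    ‖p‖ * (‖p‖ - r) * ∑ i ∈ s, ‖(p - z i)⁻¹‖ ^ 2 ≤ (p * ∑ i ∈ s, (p - z i)⁻¹).re := by
  rw [mul_sum, mul_sum, re_sum]
  exact sum_le_sum fun i hi => le_re_mul_inv_sub (hz i hi)

theorem le_norm_sum_inv_sub (hp : 0 < ‖p‖) (hz : ∀ i ∈ s, ‖z i‖ ≤ r) :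
    (‖p‖ - r) * ∑ i ∈ s, ‖(p - z i)⁻¹‖ ^ 2 ≤ ‖∑ i ∈ s, (p - z i)⁻¹‖ := by
  refine le_of_mul_le_mul_left ?_ hp
  calc ‖p‖ * ((‖p‖ - r) * ∑ i ∈ s, ‖(p - z i)⁻¹‖ ^ 2)
      ≤ (p * ∑ i ∈ s, (p - z i)⁻¹).re := by rw [← mul_assoc]; exact le_re_mul_sum_inv_sub hz
    _ ≤ ‖p * ∑ i ∈ s, (p - z i)⁻¹‖ := re_le_norm _
    _ = ‖p‖ * ‖∑ i ∈ s, (p - z i)⁻¹‖ := norm_mul _ _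

end Poisson

theorem norm_card_mul_sum_sq_sub_sq_sum_le {ι : Type*} (s : Finset ι) (u : ι → ℂ) :
    ‖(#s : ℂ) * ∑ i ∈ s, u i ^ 2 - (∑ i ∈ s, u i) ^ 2‖ ≤ 2 * #s * ∑ i ∈ s, ‖u i‖ ^ 2 := by
  have hB : ‖∑ i ∈ s, u i ^ 2‖ ≤ ∑ i ∈ s, ‖u i‖ ^ 2 :=
    (norm_sum_le _ _).trans_eq (sum_congr rfl fun i _ => norm_pow _ _)
  have hA : ‖∑ i ∈ s, u i‖ ^ 2 ≤ #s * ∑ i ∈ s, ‖u i‖ ^ 2 :=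
    (pow_le_pow_left₀ (norm_nonneg _) (norm_sum_le _ _) 2).trans sq_sum_le_card_mul_sum_sq
  calc ‖(#s : ℂ) * ∑ i ∈ s, u i ^ 2 - (∑ i ∈ s, u i) ^ 2‖
      ≤ #s * ‖∑ i ∈ s, u i ^ 2‖ + ‖∑ i ∈ s, u i‖ ^ 2 := by
        rw [← norm_pow, ← Complex.norm_natCast, ← norm_mul]
        exact norm_sub_le _ _
    _ ≤ 2 * #s * ∑ i ∈ s, ‖u i‖ ^ 2 := by
        nlinarith [mul_le_mul_of_nonneg_left hB (Nat.cast_nonneg (α := ℝ) #s)]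

theorem balayage_sub_eq (p A B : ℂ) {m : ℝ} (hA : A ≠ 0) (hm : m ≠ 0) (hm1 : m - 1 ≠ 0) :
    1 / m * (2 * (p * A).re - m) - 1 / (m - 1) * (2 * (p * ((A ^ 2 - B) / A)).re - (m - 1)) =
      2 * (p * (m * B - A ^ 2) / (m * (m - 1) * A)).re := by
  have hm0 : (m : ℂ) ≠ 0 := ofReal_ne_zero.2 hm
  have hm1' : (m : ℂ) - 1 ≠ 0 := by exact_mod_cast hm1
  have hW : p * (m * B - A ^ 2) / (m * (m - 1) * A) =
      ((1 / m : ℝ) : ℂ) * (p * A) - ((1 / (m - 1) : ℝ) : ℂ) * (p * ((A ^ 2 - B) / A)) := by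
    push_cast
    field_simp
    ring
  rw [hW, sub_re, re_ofReal_mul, re_ofReal_mul]
  field_simp
  ring

theorem abs_balayage_sub_le {n : ℕ} (hn : 2 ≤ n) {ζ : Fin n → ℂ} {lam : Fin (n - 1) → ℂ}
    {r : ℝ} (hζ : ∀ i, ‖ζ i‖ ≤ r)
    (hf : derivative (∏ i, (X - C (ζ i))) = C (n : ℂ) * ∏ j, (X - C (lam j)))
    {p : ℂ} (hp : r < ‖p‖) :
    |1 / (n : ℝ) * ∑ i, (‖p‖ ^ 2 - ‖ζ i‖ ^ 2) / ‖p - ζ i‖ ^ 2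
        - 1 / ((n : ℝ) - 1) * ∑ j, (‖p‖ ^ 2 - ‖lam j‖ ^ 2) / ‖p - lam j‖ ^ 2| ≤
      4 * ‖p‖ / (((n : ℝ) - 1) * (‖p‖ - r)) := by
  set A := ∑ i, (p - ζ i)⁻¹
  set B := ∑ i, ((p - ζ i)⁻¹) ^ 2
  set T := ∑ i, ‖(p - ζ i)⁻¹‖ ^ 2
  have hn0 : (n : ℝ) ≠ 0 := by positivity
  have hn1 : 0 < (n : ℝ) - 1 := by
    have : (2 : ℝ) ≤ n := by exact_mod_cast hn
    linarith
  have hpr : 0 < ‖p‖ - r := sub_pos.2 hp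
  have hp0 : 0 < ‖p‖ := (norm_nonneg _).trans_lt ((hζ ⟨0, by omega⟩).trans_lt hp)
  have hζp : ∀ i ∈ univ, p ≠ ζ i := by
    rintro i - rfl
    exact (hζ i).not_gt hp
  have hT : 0 < T := sum_pos (fun i hi => pow_pos (norm_pos_iff.2
    (inv_ne_zero (sub_ne_zero.2 (hζp i hi)))) 2) ⟨⟨0, by omega⟩, mem_univ _⟩
  have hAT : (‖p‖ - r) * T ≤ ‖A‖ := le_norm_sum_inv_sub hp0 fun i _ => hζ i
  have hA : A ≠ 0 := norm_pos_iff.1 ((mul_pos hpr hT).trans_le hAT)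
  have hBA : ‖(n : ℂ) * B - A ^ 2‖ ≤ 2 * n * T := by
    simpa only [card_univ, Fintype.card_fin] using
      norm_card_mul_sum_sq_sub_sq_sum_le univ fun i => (p - ζ i)⁻¹
  rw [sum_poissonKernel_eq hζp, sum_poissonKernel_eq (ne_of_derivative_prod_X_sub_C_eq hf hζp hA),
    sum_inv_sub_of_derivative_prod_X_sub_C_eq hf hζp hA, card_univ, card_univ, Fintype.card_fin,
    Fintype.card_fin, Nat.cast_sub (by omega), Nat.cast_one,
    balayage_sub_eq p A B hA hn0 hn1.ne']
  calc |2 * (p * (n * B - A ^ 2) / (n * (n - 1) * A)).re|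
      ≤ 2 * ‖p * (n * B - A ^ 2) / (n * (n - 1) * A)‖ := by
        rw [abs_mul, abs_two]
        exact mul_le_mul_of_nonneg_left (abs_re_le_norm _) zero_le_two
    _ = 2 * (‖p‖ * ‖(n : ℂ) * B - A ^ 2‖ / (n * (n - 1) * ‖A‖)) := by
        have hn1' : ‖(n : ℂ) - 1‖ = (n : ℝ) - 1 := by
          rw [← Real.norm_of_nonneg hn1.le, ← norm_real]
          push_cast
          rfl
        rw [norm_div, norm_mul, norm_mul, norm_mul, hn1', Complex.norm_natCast]
    _ ≤ 2 * (‖p‖ * (2 * n * T) / (n * (n - 1) * ((‖p‖ - r) * T))) := by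
        gcongr
    _ = 4 * ‖p‖ / (((n : ℝ) - 1) * (‖p‖ - r)) := by
        field_simp
        ring

theorem four_mul_div_le_nine_mul_log_div {n : ℕ} (hn : 2 ≤ n) {R : ℝ} (hR1 : 1 < R)
    (hR2 : R ≤ 3 / 2) :
    4 * R / (((n : ℝ) - 1) * (R - 1)) ≤ 9 * Real.log (1 / (R - 1)) / (n * (R - 1) ^ 2) := by
  have hn' : (2 : ℝ) ≤ n := by exact_mod_cast hn
  have hR : 0 < R - 1 := sub_pos.2 hR1
  have hlog : 6 ≤ 9 * Real.log (1 / (R - 1)) := by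
    have h2 : Real.log 2 ≤ Real.log (1 / (R - 1)) :=
      Real.log_le_log two_pos (by rw [le_div_iff₀ hR]; linarith)
    linarith [Real.log_two_gt_d9]
  rw [div_le_div_iff₀ (by nlinarith) (by positivity)]
  calc 4 * R * (n * (R - 1) ^ 2) = (4 * R * (R - 1) * n) * (R - 1) := by ring
    _ ≤ 6 * ((n - 1) * (R - 1)) := by
        have h3 : 4 * R * (R - 1) ≤ 3 := by nlinarith
        nlinarith [mul_le_mul_of_nonneg_right h3 (by positivity : (0 : ℝ) ≤ n)]
    _ ≤ 9 * Real.log (1 / (R - 1)) * ((n - 1) * (R - 1)) :=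
        mul_le_mul_of_nonneg_right hlog (by nlinarith)

/-- Balayage estimate (2.10): there is an absolute constant `C > 0` such that for any
monic `f = ∏ (X - ζᵢ)` of degree `n ≥ 2` with all zeros in the closed unit disk and
`f' = n ∏ (X - λⱼ)`, any real `1 < R ≤ 3/2` and any `p` with `|p| = R`, the balayages
of the zeros of `f` and of `f'` onto the circle of radius `R` differ at `p` by at most
`C log(1/(R-1)) / (n (R-1)²)`. -/
theorem balayage_estimate : ∃ C : ℝ, 0 < C ∧
    ∀ n : ℕ, 2 ≤ n → ∀ (ζ : Fin n → ℂ) (lam : Fin (n - 1) → ℂ) (f : Polynomial ℂ),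
      f = ∏ i, (Polynomial.X - Polynomial.C (ζ i)) →
      (∀ i, ‖ζ i‖ ≤ 1) →
      Polynomial.derivative f =
        Polynomial.C (n : ℂ) * ∏ j, (Polynomial.X - Polynomial.C (lam j)) →
      ∀ R : ℝ, 1 < R → R ≤ 3 / 2 → ∀ p : ℂ, ‖p‖ = R →
        |(1 / (n : ℝ)) * ∑ i, (R ^ 2 - ‖ζ i‖ ^ 2) / ‖p - ζ i‖ ^ 2
          - (1 / ((n : ℝ) - 1)) * ∑ j, (R ^ 2 - ‖lam j‖ ^ 2) / ‖p - lam j‖ ^ 2|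
        ≤ C * Real.log (1 / (R - 1)) / (n * (R - 1) ^ 2) := by
  refine ⟨9, by norm_num, ?_⟩
  rintro n hn ζ lam f rfl hζ hf R hR1 hR2 p rfl
  exact (abs_balayage_sub_le hn hζ hf hR1).trans (four_mul_div_le_nine_mul_log_div hn hR1 hR2)
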